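/- Let λ ∈ ℝ, λ ≠ 0. For (p₀,p₁) ∈ ℝ² set m² := (2/λ)²·sinh²(λp₀/2) + e^{−λp₀}p₁² (the value of the Casimir of the quantum Euclidean group) and T(p₀,p₁) := −(λ⁻¹sinh(λp₀) + e^{−λp₀}p₁·((λ/2)p₁ − i)) ∈ ℂ (the symbol of the equivariant Dirac operator). Then for all (p₀,p₁) ∈ ℝ²: |T(p₀,p₁)|² = (λ⁻¹sinh(λp₀) + (λ/2)p₁²e^{−λp₀})² + (e^{−λp₀}p₁)² = m²·(1 + λ²m²/4). In particular the square of the U_κ(iso(2))-equivariant Dirac operator equals ρ(m²(1 + λ²m²/4)). -/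

import Mathlib

/-- The off-diagonal symbol of the `U_κ(iso(2))`-equivariant Dirac operator:
`T(p₀,p₁) = −(λ⁻¹sinh(λp₀) + e^{−λp₀}p₁((λ/2)p₁ − i))`. -/
noncomputable def Tsym (l : ℝ) (p : ℝ × ℝ) : ℂ :=
  -(((l⁻¹ * Real.sinh (l * p.1) : ℝ) : ℂ) +
      ((Real.exp (-(l * p.1)) * p.2 : ℝ) : ℂ) * (((l / 2 * p.2 : ℝ) : ℂ) - Complex.I))

/-- The Casimir function of the quantum Euclidean group:
`m² = (2/λ)²sinh²(λp₀/2) + e^{−λp₀}p₁²`. -/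
noncomputable def casimir (l : ℝ) (p : ℝ × ℝ) : ℝ :=
  (2 / l) ^ 2 * Real.sinh (l * p.1 / 2) ^ 2 + Real.exp (-(l * p.1)) * p.2 ^ 2

/-!
Both sides are sums of a part independent of `p₁` and a part proportional to
`e^{−λp₀}p₁²`. With `u = λp₀`, the identity at `p₁ = 0` is
`sinh² u = 4 sinh²(u/2) cosh²(u/2)`, and the `p₁²`-part then reduces to
`sinh u + e^{−u} = cosh u = 1 + 2 sinh²(u/2)`.
-/

theorem norm_Tsym_sq (l : ℝ) (p : ℝ × ℝ) :
    ‖Tsym l p‖ ^ 2 =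
      (l⁻¹ * Real.sinh (l * p.1) + l / 2 * p.2 ^ 2 * Real.exp (-(l * p.1))) ^ 2 +
        (Real.exp (-(l * p.1)) * p.2) ^ 2 := by
  have hT : Tsym l p =
      ((-(l⁻¹ * Real.sinh (l * p.1) + l / 2 * p.2 ^ 2 * Real.exp (-(l * p.1))) : ℝ) : ℂ) +
        ((Real.exp (-(l * p.1)) * p.2 : ℝ) : ℂ) * Complex.I := by
    simp only [Tsym]
    push_cast
    ring
  rw [hT, Complex.sq_norm, Complex.normSq_add_mul_I, neg_sq]

theorem casimir_eq_casimir_zero_add (l : ℝ) (p : ℝ × ℝ) :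
    casimir l p = casimir l (p.1, 0) + Real.exp (-(l * p.1)) * p.2 ^ 2 := by
  simp [casimir]

theorem inv_mul_sinh_sq_eq_casimir {l : ℝ} (hl : l ≠ 0) (x : ℝ) :
    (l⁻¹ * Real.sinh (l * x)) ^ 2 = casimir l (x, 0) * (1 + l ^ 2 * casimir l (x, 0) / 4) := by
  obtain ⟨y, rfl⟩ : ∃ y, x = 2 * y / l := ⟨l * x / 2, by field_simp⟩
  have hy : l * (2 * y / l) = 2 * y := by field_simp
  simp only [casimir, hy, mul_div_cancel_left₀ y two_ne_zero, Real.sinh_two_mul]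
  field_simp
  rw [Real.cosh_sq]
  ring

theorem mul_inv_mul_sinh_add_exp_neg_eq_casimir {l : ℝ} (hl : l ≠ 0) (x : ℝ) :
    l * (l⁻¹ * Real.sinh (l * x)) + Real.exp (-(l * x)) = 1 + l ^ 2 * casimir l (x, 0) / 2 := by
  obtain ⟨y, rfl⟩ : ∃ y, x = 2 * y / l := ⟨l * x / 2, by field_simp⟩
  have hy : l * (2 * y / l) = 2 * y := by field_simp
  rw [← Real.cosh_sub_sinh]
  simp only [casimir, hy, mul_div_cancel_left₀ y two_ne_zero, Real.cosh_two_mul, Real.cosh_sq]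
  field_simp
  ring

-- The difference of the two sides is `(a² − A(1 + λ²A/4)) + eq²(λa + e − 1 − λ²A/2)`.
theorem sq_add_sq_eq_mul_of_rest_relations {l a e A q : ℝ}
    (ha : a ^ 2 = A * (1 + l ^ 2 * A / 4))
    (he : l * a + e = 1 + l ^ 2 * A / 2) :
    (a + l / 2 * q ^ 2 * e) ^ 2 + (e * q) ^ 2 =
      (A + e * q ^ 2) * (1 + l ^ 2 * (A + e * q ^ 2) / 4) := by
  linear_combination ha + e * q ^ 2 * he

/-- The squared modulus of the Dirac symbol equals `r²` in deformed polar coordinates,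
and equals `m²(1 + λ²m²/4)`: the square of the equivariant Dirac operator is
`ρ(m²(1 + λ²m²/4))`. -/
theorem dirac_symbol_squared (l : ℝ) (hl : l ≠ 0) (p : ℝ × ℝ) :
    ‖Tsym l p‖ ^ 2 =
      (l⁻¹ * Real.sinh (l * p.1) + l / 2 * p.2 ^ 2 * Real.exp (-(l * p.1))) ^ 2 +
        (Real.exp (-(l * p.1)) * p.2) ^ 2 ∧
    ‖Tsym l p‖ ^ 2 = casimir l p * (1 + l ^ 2 * casimir l p / 4) := by
  refine ⟨norm_Tsym_sq l p, ?_⟩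
  rw [norm_Tsym_sq, casimir_eq_casimir_zero_add]
  exact sq_add_sq_eq_mul_of_rest_relations (inv_mul_sinh_sq_eq_casimir hl p.1)
    (mul_inv_mul_sinh_add_exp_neg_eq_casimir hl p.1)
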